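/- In the public outcomes model with two agents under private goods division with additive utilities (n = 2), an allocation A is 1-IHR if and only if it is envy-free. -/
import Mathlib


/-- Utility of agent `i` under allocation `A : G → Fin 2` (each good assigned
to one of two agents), with additive valuations `v`. -/
def allocUtil {G : Type*} [Fintype G]
    (v : Fin 2 → G → ℝ) (A : G → Fin 2) (i : Fin 2) : ℝ :=
  ∑ g ∈ Finset.univ.filter (fun g => A g = i), v i g

/-- Value that agent `i` has for the bundle of agent `j`. -/
def bundleVal {G : Type*} [Fintype G]
    (v : Fin 2 → G → ℝ) (A : G → Fin 2) (i j : Fin 2) : ℝ :=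
  ∑ g ∈ Finset.univ.filter (fun g => A g = j), v i g

lemma bundle_split {G : Type*} [Fintype G]
    (v : Fin 2 → G → ℝ) (A : G → Fin 2) (i : Fin 2) :
    bundleVal v A i 0 + bundleVal v A i 1 = ∑ g, v i g := by
  unfold bundleVal
  rw [← Finset.sum_filter_add_sum_filter_not Finset.univ (fun g => A g = 0)]
  congr 1
  apply Finset.sum_congr _ (fun _ _ => rfl)
  apply Finset.filter_congr
  intro x _
  have : ∀ y : Fin 2, (¬ y = 0) ↔ y = 1 := by decide
  simp [this (A x)]

lemma other_ne (i : Fin 2) : (1 - i) ≠ i := by fin_cases i <;> decide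

lemma bundle_sum {G : Type*} [Fintype G]
    (v : Fin 2 → G → ℝ) (A : G → Fin 2) (i : Fin 2) :
    bundleVal v A i i + bundleVal v A i (1 - i) = ∑ g, v i g := by
  fin_cases i
  · exact bundle_split v A 0
  · rw [add_comm]; exact bundle_split v A 1

theorem ihr_one_iff_ef_two_agents {G : Type*} [Fintype G]
    (v : Fin 2 → G → ℝ) (hv : ∀ i g, 0 ≤ v i g)
    (A : G → Fin 2) :
    (¬ ∃ (i j : Fin 2) (A' : G → Fin 2),
        allocUtil v A' i > 2 * allocUtil v A i ∧
        ∀ k, k ≠ i → k ≠ j → allocUtil v A' k ≥ allocUtil v A k) ↔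
    (∀ i j : Fin 2, bundleVal v A i i ≥ bundleVal v A i j) := by
  have hAU : ∀ i, allocUtil v A i = bundleVal v A i i := fun i => rfl
  constructor
  · intro h i j
    by_contra hlt
    push_neg at hlt
    have hj : j = 1 - i := by
      rcases eq_or_ne j i with rfl | hne
      · exact absurd le_rfl (not_le.mpr hlt)
      · fin_cases i <;> fin_cases j <;> simp_all
    subst hj
    apply h
    refine ⟨i, 1 - i, fun _ => i, ?_, ?_⟩
    · have hconst : allocUtil v (fun _ => i) i = ∑ g, v i g := by
        unfold allocUtil
        simp
      rw [hconst, hAU, ← bundle_sum v A i]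
      linarith
    · intro k hki hkj
      exfalso
      fin_cases i <;> fin_cases k <;> simp_all
  · rintro hef ⟨i, j, A', hgt, _⟩
    have h1 : allocUtil v A' i ≤ ∑ g, v i g := by
      unfold allocUtil
      exact Finset.sum_le_sum_of_subset_of_nonneg (Finset.filter_subset _ _)
        (fun g _ _ => hv i g)
    have h2 := bundle_sum v A i
    have h3 := hef i (1 - i)
    rw [hAU] at hgt
    linarith
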